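/- The transfer function G(s) = −κ·[[s + κ/2, −2ω₀],[2ω₀, s + κ/2]]⁻¹ + I satisfies G(iω)·G(iω)† = I for all real ω, i.e. G is all-pass. -/
import Mathlib


open Matrix

theorem observer_all_pass (κ ω₀ : ℝ) (hκ : 0 < κ) (ω : ℝ)
    (A : Matrix (Fin 2) (Fin 2) ℂ)
    (hA : A = !![(-κ/2 : ℂ), (2*ω₀ : ℂ); (-(2*ω₀) : ℂ), (-κ/2 : ℂ)])
    (hinv : IsUnit ((Complex.I * ω) • (1 : Matrix (Fin 2) (Fin 2) ℂ) - A).det) :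
    (1 - (κ : ℂ) • ((Complex.I * ω) • (1 : Matrix (Fin 2) (Fin 2) ℂ) - A)⁻¹) *
      (1 - (κ : ℂ) • ((Complex.I * ω) • (1 : Matrix (Fin 2) (Fin 2) ℂ) - A)⁻¹)ᴴ = 1 := by
  set M : Matrix (Fin 2) (Fin 2) ℂ :=
    (Complex.I * ω) • (1 : Matrix (Fin 2) (Fin 2) ℂ) - A with hM
  have hsum : M + Mᴴ = (κ : ℂ) • (1 : Matrix (Fin 2) (Fin 2) ℂ) := by
    subst hA
    ext i j
    fin_cases i <;> fin_cases j <;>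
      simp [hM, Matrix.conjTranspose_apply, Matrix.one_apply, Complex.ext_iff] <;> ring
  have hMdet : IsUnit M.det := hinv
  have hMHdet : IsUnit Mᴴ.det := by
    rw [Matrix.det_conjTranspose]
    exact (starRingEnd ℂ).isUnit_map hMdet
  have hinvH : (M⁻¹)ᴴ = (Mᴴ)⁻¹ := Matrix.conjTranspose_nonsing_inv M
  have key : M⁻¹ + (Mᴴ)⁻¹ = (κ : ℂ) • (M⁻¹ * (Mᴴ)⁻¹) := by
    have h1 : M⁻¹ * (M + Mᴴ) * (Mᴴ)⁻¹ = M⁻¹ + (Mᴴ)⁻¹ := by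
      rw [Matrix.mul_add, Matrix.add_mul, Matrix.nonsing_inv_mul M hMdet,
        Matrix.mul_assoc, Matrix.mul_nonsing_inv Mᴴ hMHdet, Matrix.one_mul, Matrix.mul_one]
      abel
    rw [← h1, hsum, Matrix.mul_smul, Matrix.smul_mul, Matrix.mul_one]
  have hκH : ((κ : ℂ) • M⁻¹)ᴴ = (κ : ℂ) • (Mᴴ)⁻¹ := by
    rw [Matrix.conjTranspose_smul, hinvH]
    congr 1
    simp
  rw [Matrix.conjTranspose_sub, Matrix.conjTranspose_one, hκH]
  simp only [Matrix.sub_mul, Matrix.mul_sub, Matrix.one_mul, Matrix.mul_one,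
    Matrix.smul_mul, Matrix.mul_smul, smul_smul]
  rw [← key]
  simp only [smul_sub, smul_add]
  abel
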